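/- For p ∈ (0,1/2), h_p((1-p)/p) ≥ 2·H_p(1-p) ≥ 2·exp(-2(p/(1-p))^2)·(1-p)/p, where h_p(x) = 2H_p(px) + (p/(1-p))H_p(p^2 x) and H_p(z) = ∑_{l≥1} Φ_p(l)^2 z^l. -/

import Mathlib

noncomputable def Phi (p : ℝ) (l : ℕ) : ℝ :=
  ∏ k ∈ Finset.Icc 1 l, (1 - p) / (1 - p + p ^ (k + 1))

noncomputable def H (p : ℝ) (z : ℝ) : ℝ :=
  ∑' l : ℕ, Phi p (l + 1) ^ 2 * z ^ (l + 1)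

noncomputable def h (p : ℝ) (x : ℝ) : ℝ :=
  2 * H p (p * x) + (p / (1 - p)) * H p (p ^ 2 * x)

/-!
Each factor of `Φ_p(l)` is `1 / (1 + p^(k+1)/(1-p)) ≥ exp (-p^(k+1)/(1-p))`, and these exponents
sum to at most `(p/(1-p))²`, so `Φ_p(l)² ≥ exp (-2 (p/(1-p))²)` uniformly in `l`. Comparing
`H_p(z)` termwise with `∑ z^l = z/(1-z)` and taking `z = 1-p` gives the second inequality. The
first one holds because `h_p((1-p)/p) = 2 H_p(1-p) + (p/(1-p)) H_p(p(1-p))` and `H_p ≥ 0` on `[0, ∞)`.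
-/

open Finset Real

lemma exp_neg_div_le_div_add {a q : ℝ} (ha : 0 < a) (hq : 0 ≤ q) :
    exp (-(q / a)) ≤ a / (a + q) := by
  have hpos : 0 < q / a + 1 := by positivity
  calc exp (-(q / a)) = (exp (q / a))⁻¹ := exp_neg _
    _ ≤ (q / a + 1)⁻¹ := inv_anti₀ hpos (add_one_le_exp _)
    _ = a / (a + q) := by field_simp; ring

variable {p z : ℝ}

lemma sum_Icc_pow_succ_le (hp0 : 0 ≤ p) (hp1 : p < 1) (l : ℕ) :
    ∑ k ∈ Icc 1 l, p ^ (k + 1) ≤ p ^ 2 / (1 - p) := by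
  rw [← Ico_add_one_right_eq_Icc, sum_Ico_add' (fun k => p ^ k)]
  exact geom_sum_Ico_le_of_lt_one hp0 hp1

lemma one_sub_add_pow_pos (hp0 : 0 ≤ p) (hp1 : p < 1) (k : ℕ) : 0 < 1 - p + p ^ (k + 1) :=
  add_pos_of_pos_of_nonneg (sub_pos.2 hp1) (pow_nonneg hp0 _)

lemma Phi_nonneg (hp0 : 0 ≤ p) (hp1 : p < 1) (l : ℕ) : 0 ≤ Phi p l :=
  prod_nonneg fun k _ => div_nonneg (sub_pos.2 hp1).le (one_sub_add_pow_pos hp0 hp1 k).le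

lemma Phi_le_one (hp0 : 0 ≤ p) (hp1 : p < 1) (l : ℕ) : Phi p l ≤ 1 :=
  prod_le_one (fun k _ => div_nonneg (sub_pos.2 hp1).le (one_sub_add_pow_pos hp0 hp1 k).le)
    fun k _ => div_le_one_of_le₀ (le_add_of_nonneg_right (pow_nonneg hp0 _))
      (one_sub_add_pow_pos hp0 hp1 k).le

lemma exp_neg_sq_le_Phi (hp0 : 0 ≤ p) (hp1 : p < 1) (l : ℕ) :
    exp (-((p / (1 - p)) ^ 2)) ≤ Phi p l := by
  have h1p : 0 < 1 - p := sub_pos.2 hp1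
  have hexponent : ∑ k ∈ Icc 1 l, p ^ (k + 1) / (1 - p) ≤ (p / (1 - p)) ^ 2 := by
    rw [← sum_div, div_pow, sq (1 - p), ← div_div]
    gcongr
    exact sum_Icc_pow_succ_le hp0 hp1 l
  calc exp (-((p / (1 - p)) ^ 2)) ≤ exp (-∑ k ∈ Icc 1 l, p ^ (k + 1) / (1 - p)) := by gcongr
    _ = ∏ k ∈ Icc 1 l, exp (-(p ^ (k + 1) / (1 - p))) := by rw [← exp_sum, sum_neg_distrib]
    _ ≤ Phi p l := prod_le_prod (fun _ _ => (exp_pos _).le)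
        fun _ _ => exp_neg_div_le_div_add h1p (pow_nonneg hp0 _)

lemma summable_H (hp0 : 0 ≤ p) (hp1 : p < 1) (hz0 : 0 ≤ z) (hz1 : z < 1) :
    Summable fun l : ℕ => Phi p (l + 1) ^ 2 * z ^ (l + 1) :=
  Summable.of_nonneg_of_le (fun _ => mul_nonneg (sq_nonneg _) (pow_nonneg hz0 _))
    (fun _ => mul_le_of_le_one_left (pow_nonneg hz0 _)
      (pow_le_one₀ (Phi_nonneg hp0 hp1 _) (Phi_le_one hp0 hp1 _)))
    ((summable_nat_add_iff 1).2 (summable_geometric_of_lt_one hz0 hz1))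

lemma H_nonneg (hz : 0 ≤ z) : 0 ≤ H p z :=
  tsum_nonneg fun _ => mul_nonneg (sq_nonneg _) (pow_nonneg hz _)

lemma exp_mul_div_le_H (hp0 : 0 ≤ p) (hp1 : p < 1) (hz0 : 0 ≤ z) (hz1 : z < 1) :
    exp (-2 * (p / (1 - p)) ^ 2) * (z / (1 - z)) ≤ H p z := by
  set c := exp (-2 * (p / (1 - p)) ^ 2) with hc_def
  have hgeom : HasSum (fun l : ℕ => c * z ^ (l + 1)) (c * (z / (1 - z))) := by
    simpa only [pow_succ', div_eq_mul_inv, mul_assoc] using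
      ((hasSum_geometric_of_lt_one hz0 hz1).mul_left z).mul_left c
  have hc : c = exp (-((p / (1 - p)) ^ 2)) ^ 2 := by
    rw [hc_def, ← exp_nat_mul]; congr 1; push_cast; ring
  refine hasSum_le (fun l => ?_) hgeom (summable_H hp0 hp1 hz0 hz1).hasSum
  gcongr
  rw [hc]
  exact pow_le_pow_left₀ (exp_pos _).le (exp_neg_sq_le_Phi hp0 hp1 _) 2

lemma h_div_eq (hp : p ≠ 0) :
    h p ((1 - p) / p) = 2 * H p (1 - p) + p / (1 - p) * H p (p * (1 - p)) := by
  rw [h, mul_div_cancel₀ _ hp, show p ^ 2 * ((1 - p) / p) = p * (1 - p) by field_simp]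

theorem stmt_11 (p : ℝ) (hp : 0 < p) (hp1 : p < 1 / 2) :
    h p ((1 - p) / p) ≥ 2 * H p (1 - p) ∧
    2 * H p (1 - p) ≥ 2 * Real.exp (-2 * (p / (1 - p)) ^ 2) * ((1 - p) / p) := by
  have h1p : 0 < 1 - p := by linarith
  have hlow := exp_mul_div_le_H hp.le (by linarith) h1p.le (sub_lt_self 1 hp)
  rw [sub_sub_cancel] at hlow
  refine ⟨?_, by linarith⟩
  have hrest : 0 ≤ p / (1 - p) * H p (p * (1 - p)) :=
    mul_nonneg (div_nonneg hp.le h1p.le) (H_nonneg (mul_nonneg hp.le h1p.le))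
  rw [h_div_eq hp.ne']
  linarith
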